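/- Strong Close Point Elimination: Let pq, pr, rx be three edges of a TSP instance and z ∈ V \ {p,q,r,x}. If l(xq) + l(rz) + l(zp) − m_{pr}(z) < l(pq) + l(rx), where m_{pr}(z) is the metric excess of z with respect to the edge pr, then the edges pq, pr, rx cannot all belong to the same optimum TSP tour. -/

import Mathlib

/-- A tour (Hamiltonian cycle), encoded as a cyclic permutation with no fixed points. -/
def IsTour {V : Type*} [Fintype V] (σ : Equiv.Perm V) : Prop :=
  σ.IsCycle ∧ ∀ v : V, σ v ≠ v

/-- The length of a tour. -/
noncomputable def tourLength {V : Type*} [Fintype V] (l : V → V → ℝ)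
    (σ : Equiv.Perm V) : ℝ :=
  ∑ v, l v (σ v)

/-- An optimum tour: a tour of minimum length. -/
def IsOptimumTour {V : Type*} [Fintype V] (l : V → V → ℝ) (σ : Equiv.Perm V) : Prop :=
  IsTour σ ∧ ∀ τ : Equiv.Perm V, IsTour τ → tourLength l σ ≤ tourLength l τ

/-- The edge `{a,b}` belongs to the tour `σ`. -/
def edgeIn {V : Type*} [Fintype V] (σ : Equiv.Perm V) (a b : V) : Prop :=
  σ a = b ∨ σ b = a

/-- The metric excess `m_{pr}(z)` of a vertex `z` with respect to the edge `pr`: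
the minimum, over pairs of distinct neighbours `a, b` of `z` avoiding `p` and `r`,
of the maximum of the four short-cut quantities. -/
noncomputable def metricExcess {V : Type*} (l : V → V → ℝ) (p r z : V) : ℝ :=
  sInf {M : ℝ | ∃ a b : V, a ≠ b ∧ a ≠ p ∧ a ≠ r ∧ b ≠ p ∧ b ≠ r ∧
    M = max (max (l a z + l z p - l a p) (l b z + l z p - l b p))
            (max (l a z + l z r - l a r) (l b z + l z r - l b r))}

/-!
After reversing the tour if necessary, an optimum tour `σ` traverses `x → r → p → q`. Dropping
the edges `pq` and `rx`, joining `x` to `q` and reinserting the segment `{p, r}`, in either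
orientation, into one of the two tour edges at `z` gives four tours; these are the short-cuts at
`z` of the Eulerian multigraph obtained by adding `pz` and `rz`. None of them is shorter than `σ`,
so each of the four terms in the metric excess at the tour neighbours of `z` is at most
`l(xq) + l(rz) + l(zp) - l(pq) - l(rx)`, and then so is `m_{pr}(z)`. The tours are built from
cycles by transpositions: `swap y (g y) * g` removes `y` from the cycle `g`, and
`swap y (g w) * g` inserts a fixed point `y` after `w`.
-/

namespace Equiv.Perm

variable {α : Type*} {g : Perm α}

theorem IsCycle.exists_remove (hg : g.IsCycle) {u y : α} (hu : g u = y) (hy : g y ≠ y)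
    (hyu : g y ≠ u) :
    ∃ h : Perm α, h.IsCycle ∧ h y = y ∧ h u = g y ∧ ∀ v, v ≠ u → v ≠ y → h v = g v := by
  classical
  refine ⟨swap y (g y) * g, hg.swap_mul hy fun e => hyu (g.injective (e.trans hu.symm)),
    swap_apply_right _ _, by simp [hu], fun v hvu hvy => ?_⟩
  exact swap_apply_of_ne_of_ne (fun e => hvu (g.injective (e.trans hu.symm)))
    (fun e => hvy (g.injective e))

variable [Finite α]

theorem IsCycle.exists_insert (hg : g.IsCycle) {y w : α} (hy : g y = y) (hw : g w ≠ w) :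
    ∃ h : Perm α, h.IsCycle ∧ h w = y ∧ h y = g w ∧ ∀ v, v ≠ w → v ≠ y → h v = g v := by
  classical
  have hyw : y ≠ w := by rintro rfl; exact hw hy
  set h := swap y (g w) * g
  have hhw : h w = y := swap_apply_right _ _
  have hhy : h y = g w := by simp [h, hy]
  have hh : ∀ v, v ≠ w → v ≠ y → h v = g v := fun v hvw hvy =>
    swap_apply_of_ne_of_ne (fun e => hvy (g.injective (e.trans hy.symm)))
      (fun e => hvw (g.injective e))
  refine ⟨h, ⟨w, by rw [hhw]; exact hyw, fun v hv => ?_⟩, hhw, hhy, hh⟩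
  -- every iterate `g^n w` lies on the cycle of `h` through `w`, since `h` only detours via `y`
  have reach : ∀ n : ℕ, h.SameCycle w ((g ^ n) w) := by
    intro n
    induction n with
    | zero => exact SameCycle.refl _ _
    | succ n ih =>
      rw [pow_succ', mul_apply]
      by_cases hn : (g ^ n) w = w
      · rw [hn, ← hhy, ← hhw]
        exact (SameCycle.refl h w).apply_right.apply_right
      · have hny : (g ^ n) w ≠ y := fun e =>
          hyw ((g ^ n).injective (e.trans (pow_apply_eq_self_of_apply_eq_self hy n).symm)).symm
        rw [← hh _ hn hny]
        exact ih.apply_right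
  by_cases hvy : v = y
  · rw [hvy, ← hhw]; exact (SameCycle.refl h w).apply_right
  by_cases hvw : v = w
  · rw [hvw]
  obtain ⟨n, rfl⟩ := hg.exists_pow_eq hw (by rwa [← hh v hvw hvy])
  exact reach n

theorem IsCycle.exists_insert_pair (hg : g.IsCycle) {s t w : α} (hs : g s = s) (ht : g t = t)
    (hst : s ≠ t) (hw : g w ≠ w) :
    ∃ h : Perm α, h.IsCycle ∧ h w = s ∧ h s = t ∧ h t = g w ∧
      ∀ v, v ≠ w → v ≠ s → v ≠ t → h v = g v := by
  have hws : w ≠ s := by rintro rfl; exact hw hs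
  have hwt : w ≠ t := by rintro rfl; exact hw ht
  obtain ⟨h₁, hc₁, hw₁, ht₁, h₁_eq⟩ := hg.exists_insert ht hw
  obtain ⟨h, hc, hw', hs', h_eq⟩ := hc₁.exists_insert
    ((h₁_eq s hws.symm hst).trans hs) (by rw [hw₁]; exact hwt.symm)
  refine ⟨h, hc, hw', hs'.trans hw₁, ?_, fun v hvw hvs hvt => ?_⟩
  · rw [h_eq t hwt.symm hst.symm, ht₁]
  · rw [h_eq v hvw hvs, h₁_eq v hvw hvt]

end Equiv.Perm

open Equiv Equiv.Perm

section Tour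

variable {V : Type*} [Fintype V] {σ : Perm V}

theorem IsTour.pow_apply_ne (hσ : IsTour σ) {n : ℕ} (hn0 : 0 < n) (hn : n < Fintype.card V)
    (v : V) : (σ ^ n) v ≠ v := by
  classical
  intro e
  have horder : orderOf σ = Fintype.card V := by
    rw [hσ.1.orderOf, ← Finset.card_univ]
    exact congrArg Finset.card (Finset.eq_univ_iff_forall.mpr fun u => mem_support.mpr (hσ.2 u))
  have := Nat.le_of_dvd hn0 (orderOf_dvd_of_pow_eq_one ((hσ.1.pow_eq_one_iff' (hσ.2 v)).mpr e))
  omega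

theorem IsTour.inv (hσ : IsTour σ) : IsTour σ⁻¹ :=
  ⟨hσ.1.inv, fun v e => hσ.2 v (by simpa using (congrArg σ e).symm)⟩

theorem tourLength_inv (l : V → V → ℝ) (hsymm : ∀ a b, l a b = l b a) (σ : Perm V) :
    tourLength l σ⁻¹ = tourLength l σ := by
  unfold tourLength
  rw [← Equiv.sum_comp σ]
  simp [hsymm]

theorem IsOptimumTour.inv {l : V → V → ℝ} (hsymm : ∀ a b, l a b = l b a)
    (hσ : IsOptimumTour l σ) : IsOptimumTour l σ⁻¹ :=
  ⟨hσ.1.inv, fun τ hτ => tourLength_inv l hsymm σ ▸ hσ.2 τ hτ⟩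

theorem tourLength_sub_eq_sum (l : V → V → ℝ) {τ : Perm V} (S : Finset V)
    (h : ∀ v ∉ S, τ v = σ v) :
    tourLength l τ - tourLength l σ = ∑ v ∈ S, (l v (τ v) - l v (σ v)) := by
  unfold tourLength
  rw [← Finset.sum_sub_distrib]
  exact (Finset.sum_subset (Finset.subset_univ S) fun v _ hv => by rw [h v hv, sub_self]).symm

end Tour

section Relocation

variable {V : Type*} [Fintype V] {σ : Perm V} {p q r x : V}

theorem IsTour.ne_of_path (hσ : IsTour σ) (hxr : σ x = r) (hrp : σ r = p) (hpq : σ p = q)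
    (hqr : q ≠ r) : p ≠ r ∧ r ≠ x ∧ p ≠ x :=
  ⟨fun h => hσ.2 p (h ▸ hrp), fun h => hσ.2 x (h ▸ hxr),
    fun h => hqr (hpq.symm.trans (h ▸ hxr))⟩

theorem IsTour.exists_remove_pair (hσ : IsTour σ) (hxr : σ x = r) (hrp : σ r = p)
    (hpq : σ p = q) (hqr : q ≠ r) (hqx : q ≠ x) :
    ∃ ρ : Perm V, ρ.IsCycle ∧ ρ p = p ∧ ρ r = r ∧ ρ x = q ∧
      ∀ v, v ≠ p → v ≠ r → v ≠ x → ρ v = σ v := by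
  obtain ⟨hpr, hrx, hpx⟩ := hσ.ne_of_path hxr hrp hpq hqr
  obtain ⟨ρ₁, hc₁, hp₁, hr₁, hρ₁⟩ :=
    hσ.1.exists_remove hrp (hσ.2 p) (by rw [hpq]; exact hqr)
  obtain ⟨ρ, hc, hr, hx, hρ⟩ := hc₁.exists_remove ((hρ₁ x hrx.symm hpx.symm).trans hxr)
    (by rw [hr₁, hpq]; exact hqr) (by rw [hr₁, hpq]; exact hqx)
  refine ⟨ρ, hc, (hρ p hpx hpr).trans hp₁, hr, by rw [hx, hr₁, hpq], fun v hvp hvr hvx => ?_⟩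
  rw [hρ v hvx hvr, hρ₁ v hvr hvp]

theorem IsTour.exists_relocate (hσ : IsTour σ) (hxr : σ x = r) (hrp : σ r = p)
    (hpq : σ p = q) (hqr : q ≠ r) (hqx : q ≠ x) {w s t : V} (hwp : w ≠ p) (hwr : w ≠ r)
    (hσwp : σ w ≠ p) (hσwr : σ w ≠ r) (hst : s = p ∧ t = r ∨ s = r ∧ t = p) :
    ∃ τ : Perm V, IsTour τ ∧ τ w = s ∧ τ s = t ∧ τ t = σ w ∧ τ x = q ∧
      ∀ v, v ≠ w → v ≠ s → v ≠ t → v ≠ x → τ v = σ v := by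
  obtain ⟨ρ, hc, hp, hr, hx, hρ⟩ := hσ.exists_remove_pair hxr hrp hpq hqr hqx
  obtain ⟨hpr, hrx, hpx⟩ := hσ.ne_of_path hxr hrp hpq hqr
  have hwx : w ≠ x := by rintro rfl; exact hσwr hxr
  have hρw : ρ w = σ w := hρ w hwp hwr hwx
  obtain ⟨hs, ht, hst', hne, hcover⟩ : ρ s = s ∧ ρ t = t ∧ s ≠ t ∧
      (∀ v, v ≠ p → v ≠ r → v ≠ s ∧ v ≠ t) ∧ ∀ v, v ≠ s → v ≠ t → v ≠ p ∧ v ≠ r := by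
    rcases hst with ⟨rfl, rfl⟩ | ⟨rfl, rfl⟩
    · exact ⟨hp, hr, hpr, fun v h₁ h₂ => ⟨h₁, h₂⟩, fun v h₁ h₂ => ⟨h₁, h₂⟩⟩
    · exact ⟨hr, hp, hpr.symm, fun v h₁ h₂ => ⟨h₂, h₁⟩, fun v h₁ h₂ => ⟨h₂, h₁⟩⟩
  obtain ⟨hxs, hxt⟩ := hne x hpx.symm hrx.symm
  obtain ⟨τ, hc', hw, hs', ht', hτ⟩ :=
    hc.exists_insert_pair hs ht hst' (by rw [hρw]; exact hσ.2 w)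
  have hτx : τ x = q := by rw [hτ x hwx.symm hxs hxt, hx]
  have hτv : ∀ v, v ≠ w → v ≠ s → v ≠ t → v ≠ x → τ v = σ v := fun v hvw hvs hvt hvx =>
    (hτ v hvw hvs hvt).trans (hρ v (hcover v hvs hvt).1 (hcover v hvs hvt).2 hvx)
  refine ⟨τ, ⟨hc', fun v => ?_⟩, hw, hs', ht'.trans hρw, hτx, hτv⟩
  by_cases hvw : v = w
  · subst hvw; rw [hw]; exact (hne v hwp hwr).1.symm
  by_cases hvs : v = s
  · subst hvs; rw [hs']; exact hst'.symm
  by_cases hvt : v = t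
  · subst hvt; rw [ht', hρw]; exact (hne _ hσwp hσwr).2
  by_cases hvx : v = x
  · subst hvx; rw [hτx]; exact hqx
  · rw [hτv v hvw hvs hvt hvx]; exact hσ.2 v

theorem IsOptimumTour.le_of_relocate {l : V → V → ℝ} (hσ : IsOptimumTour l σ)
    (hxr : σ x = r) (hrp : σ r = p) (hpq : σ p = q) (hqr : q ≠ r) (hqx : q ≠ x) {w s t : V}
    (hwp : w ≠ p) (hwr : w ≠ r) (hσwp : σ w ≠ p) (hσwr : σ w ≠ r)
    (hst : s = p ∧ t = r ∨ s = r ∧ t = p) :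
    l w (σ w) + l p q + l r p + l x r ≤ l w s + l s t + l t (σ w) + l x q := by
  classical
  obtain ⟨τ, hτ, hw, hs, ht, hx, hτv⟩ :=
    hσ.1.exists_relocate hxr hrp hpq hqr hqx hwp hwr hσwp hσwr hst
  have hdiff := tourLength_sub_eq_sum l {w, s, t, x} (τ := τ) (σ := σ) fun v hv => by
    simp only [Finset.mem_insert, Finset.mem_singleton, not_or] at hv
    exact hτv v hv.1 hv.2.1 hv.2.2.1 hv.2.2.2
  obtain ⟨hpr, hrx, hpx⟩ := hσ.1.ne_of_path hxr hrp hpq hqr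
  have hwx : w ≠ x := by rintro rfl; exact hσwr hxr
  have hle := hσ.2 τ hτ
  rcases hst with ⟨rfl, rfl⟩ | ⟨rfl, rfl⟩ <;>
  · rw [Finset.sum_insert (by simp [hwp, hwr, hwx]),
      Finset.sum_insert (by simp [hpr, hpr.symm, hpx, hrx]),
      Finset.sum_insert (by simp [hpx, hrx]), Finset.sum_singleton,
      hw, hs, ht, hx, hxr, hrp, hpq] at hdiff
    linarith

end Relocation

theorem metricExcess_le {V : Type*} [Finite V] (l : V → V → ℝ) {p r z a b : V} (hab : a ≠ b)
    (hap : a ≠ p) (har : a ≠ r) (hbp : b ≠ p) (hbr : b ≠ r) :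
    metricExcess l p r z ≤ max (max (l a z + l z p - l a p) (l b z + l z p - l b p))
      (max (l a z + l z r - l a r) (l b z + l z r - l b r)) := by
  refine csInf_le ?_ ⟨a, b, hab, hap, har, hbp, hbr, rfl⟩
  refine ((Set.finite_range fun c : V × V =>
    max (max (l c.1 z + l z p - l c.1 p) (l c.2 z + l z p - l c.2 p))
      (max (l c.1 z + l z r - l c.1 r) (l c.2 z + l z r - l c.2 r))).subset ?_).bddBelow
  rintro M ⟨a', b', -, -, -, -, -, rfl⟩
  exact ⟨(a', b'), rfl⟩

theorem edgeIn_orientation {V : Type*} [Fintype V] {σ : Perm V} {p q r x : V}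
    (h₁ : edgeIn σ p q) (h₂ : edgeIn σ p r) (h₃ : edgeIn σ r x) (hqr : q ≠ r) (hpx : p ≠ x) :
    σ x = r ∧ σ r = p ∧ σ p = q ∨ σ q = p ∧ σ p = r ∧ σ r = x := by
  have := σ.injective
  unfold edgeIn at *
  grind [Function.Injective]

section Shortcut

variable {V : Type*} [Fintype V] {l : V → V → ℝ} {σ : Perm V} {p q r x z : V}

/-- The four short-cut terms at the tour neighbours `a` and `σ z` of `z` are paid for by the four
ways of reinserting the segment `{p, r}` into the edge `a z` or `z (σ z)`. -/
theorem IsOptimumTour.max_shortcut_le (hsymm : ∀ a b, l a b = l b a) (hσ : IsOptimumTour l σ)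
    (hxr : σ x = r) (hrp : σ r = p) (hpq : σ p = q) (hqr : q ≠ r) (hqx : q ≠ x)
    (hzp : z ≠ p) (hzr : z ≠ r) {a : V} (haz : σ a = z) (hap : a ≠ p) (har : a ≠ r)
    (hbp : σ z ≠ p) (hbr : σ z ≠ r) :
    max (max (l a z + l z p - l a p) (l (σ z) z + l z p - l (σ z) p))
        (max (l a z + l z r - l a r) (l (σ z) z + l z r - l (σ z) r)) ≤
      l x q + l r z + l z p - l p q - l r x := by
  have h₁ := hσ.le_of_relocate hxr hrp hpq hqr hqx hap har (haz ▸ hzp) (haz ▸ hzr)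
    (Or.inl ⟨rfl, rfl⟩)
  have h₂ := hσ.le_of_relocate hxr hrp hpq hqr hqx hzp hzr hbp hbr (Or.inr ⟨rfl, rfl⟩)
  have h₃ := hσ.le_of_relocate hxr hrp hpq hqr hqx hap har (haz ▸ hzp) (haz ▸ hzr)
    (Or.inr ⟨rfl, rfl⟩)
  have h₄ := hσ.le_of_relocate hxr hrp hpq hqr hqx hzp hzr hbp hbr (Or.inl ⟨rfl, rfl⟩)
  rw [haz] at h₁ h₃
  refine max_le (max_le ?_ ?_) (max_le ?_ ?_) <;>
    linarith [hsymm p r, hsymm r x, hsymm z (σ z), hsymm p (σ z), hsymm r (σ z), hsymm z r,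
      hsymm p z]

theorem IsOptimumTour.add_le_of_path (hsymm : ∀ a b, l a b = l b a) (hσ : IsOptimumTour l σ)
    (hxr : σ x = r) (hrp : σ r = p) (hpq : σ p = q) (hqr : q ≠ r)
    (hzp : z ≠ p) (hzq : z ≠ q) (hzr : z ≠ r) (hzx : z ≠ x) :
    l p q + l r x ≤ l x q + l r z + l z p - metricExcess l p r z := by
  classical
  obtain ⟨hpr, -, -⟩ := hσ.1.ne_of_path hxr hrp hpq hqr
  have hcard : 4 ≤ Fintype.card V := by
    have : ({p, q, r, z} : Finset V).card = 4 := Finset.card_eq_four.mpr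
      ⟨p, q, r, z, fun h => hσ.1.2 p (hpq.trans h.symm), hpr, hzp.symm, hqr, hzq.symm,
        hzr.symm, rfl⟩
    exact this ▸ Finset.card_le_univ _
  have hqx : q ≠ x := by
    rintro rfl
    exact hσ.1.pow_apply_ne (n := 3) (by norm_num) (by omega) p
      (by simp [pow_succ, hxr, hrp, hpq])
  set a := σ⁻¹ z
  have haz : σ a = z := σ.apply_symm_apply z
  have hab : a ≠ σ z := fun h =>
    hσ.1.pow_apply_ne (n := 2) (by norm_num) (by omega) a (by rw [pow_two, mul_apply, haz, h])
  have hap : a ≠ p := fun h => hzq (by rw [← haz, h, hpq])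
  have har : a ≠ r := fun h => hzp (by rw [← haz, h, hrp])
  have hbp : σ z ≠ p := fun h => hzr (σ.injective (h.trans hrp.symm))
  have hbr : σ z ≠ r := fun h => hzx (σ.injective (h.trans hxr.symm))
  linarith [metricExcess_le l (z := z) hab hap har hbp hbr,
    hσ.max_shortcut_le hsymm hxr hrp hpq hqr hqx hzp hzr haz hap har hbp hbr]

end Shortcut

theorem strong_close_point_elimination_general {V : Type*} [Fintype V]
    (l : V → V → ℝ) (hsymm : ∀ a b, l a b = l b a)
    (p q r x z : V)
    (hqr : q ≠ r) (hpx : p ≠ x)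
    (hzp : z ≠ p) (hzq : z ≠ q) (hzr : z ≠ r) (hzx : z ≠ x)
    (hineq : l x q + l r z + l z p - metricExcess l p r z < l p q + l r x) :
    ∀ σ : Equiv.Perm V, IsOptimumTour l σ →
      ¬(edgeIn σ p q ∧ edgeIn σ p r ∧ edgeIn σ r x) := by
  rintro σ hσ ⟨h₁, h₂, h₃⟩
  rcases edgeIn_orientation h₁ h₂ h₃ hqr hpx with ⟨hxr, hrp, hpq⟩ | ⟨hqp, hpr, hrx⟩
  · exact (hσ.add_le_of_path hsymm hxr hrp hpq hqr hzp hzq hzr hzx).not_gt hineq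
  · exact ((hσ.inv hsymm).add_le_of_path hsymm (inv_eq_iff_eq.mpr hrx.symm)
      (inv_eq_iff_eq.mpr hpr.symm) (inv_eq_iff_eq.mpr hqp.symm) hqr hzp hzq hzr hzx).not_gt hineq

/-- **Strong Close Point Elimination Theorem**: the edges `pq`, `pr`, `rx` are
`3`-incompatible. -/
theorem strong_close_point_elimination {V : Type*} [Fintype V]
    (hcard : 5 ≤ Fintype.card V)
    (l : V → V → ℝ) (hsymm : ∀ a b, l a b = l b a) (hnonneg : ∀ a b, 0 ≤ l a b)
    (p q r x z : V)
    (hpq : p ≠ q) (hpr : p ≠ r) (hqr : q ≠ r) (hrx : r ≠ x) (hpx : p ≠ x)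
    (hzp : z ≠ p) (hzq : z ≠ q) (hzr : z ≠ r) (hzx : z ≠ x)
    (hineq : l x q + l r z + l z p - metricExcess l p r z < l p q + l r x) :
    ∀ σ : Equiv.Perm V, IsOptimumTour l σ →
      ¬(edgeIn σ p q ∧ edgeIn σ p r ∧ edgeIn σ r x) :=
  strong_close_point_elimination_general l hsymm p q r x z hqr hpx hzp hzq hzr hzx hineq
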